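/- Let T₀ > 0 and η ∈ L²([0,T₀] × [0,T₀];ℝ). Then ∫₀^{T₀} ∫₀^{T₀} g(t,T)² dT dt ≤ (5T₀/2) · ∫₀^{T₀} ∫₀^{T₀} η(t,u)² du dt. -/

import Mathlib

/-! By Cauchy–Schwarz, `λ(t,T)² ≤ T · ∫₀^{T₀} η(t,u)² du`, so the first term of `g(t,T)` is
controlled uniformly in `T`: `(a + b)² ≤ 2a² + 2b²` gives the pointwise bound
`g(t,T)² ≤ ½ ∫₀^{T₀} η(t,u)² du + 2T₀ η(t,T)²`. Integrating in `T` yields the factor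
`T₀/2 + 2T₀ = 5T₀/2` for almost every `t`, and Fubini's theorem for the square integrable `η`
integrates this over `t`. -/

open MeasureTheory Real Set

/-- The market price of risk: `λ(t,T) = ∫₀^T η(t,u) du`. -/
noncomputable def mpr (η : ℝ → ℝ → ℝ) (t T : ℝ) : ℝ := ∫ u in (0:ℝ)..T, η t u

/-- The integrand of the space-time Girsanov kernel:
`g(s,u) = λ(s,u)/(2√u) + √u·η(s,u)`. -/
noncomputable def gker (η : ℝ → ℝ → ℝ) (s u : ℝ) : ℝ :=
  mpr η s u / (2 * Real.sqrt u) + Real.sqrt u * η s u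

theorem sq_integral_le_measureReal_mul_integral_sq {α : Type*} [MeasurableSpace α]
    {μ : Measure α} [IsFiniteMeasure μ] {f : α → ℝ} (hf : MemLp f 2 μ) :
    (∫ a, f a ∂μ) ^ 2 ≤ μ.real univ * ∫ a, f a ^ 2 ∂μ := by
  rcases eq_zero_or_neZero μ with rfl | _
  · simp
  have hm : 0 < μ.real univ := measureReal_univ_pos
  have jensen : (⨍ a, f a ∂μ) ^ 2 ≤ ⨍ a, f a ^ 2 ∂μ :=
    (even_two.convexOn_pow (𝕜 := ℝ)).map_average_le (continuous_pow 2).continuousOn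
      isClosed_univ (Filter.Eventually.of_forall fun _ => mem_univ _) (hf.integrable one_le_two)
      hf.integrable_sq
  rw [average_eq, average_eq, smul_eq_mul, smul_eq_mul] at jensen
  calc (∫ a, f a ∂μ) ^ 2 = μ.real univ ^ 2 * ((μ.real univ)⁻¹ * ∫ a, f a ∂μ) ^ 2 := by
        field_simp
    _ ≤ μ.real univ ^ 2 * ((μ.real univ)⁻¹ * ∫ a, f a ^ 2 ∂μ) := by gcongr
    _ = μ.real univ * ∫ a, f a ^ 2 ∂μ := by field_simp

theorem sq_intervalIntegral_le_mul_integral_sq {f : ℝ → ℝ} {a b : ℝ} (hab : a ≤ b)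
    (hf : MemLp f 2 (volume.restrict (Ioc a b))) :
    (∫ u in a..b, f u) ^ 2 ≤ (b - a) * ∫ u in Ioc a b, f u ^ 2 := by
  have := sq_integral_le_measureReal_mul_integral_sq hf
  rwa [measureReal_restrict_apply_univ, volume_real_Ioc_of_le hab,
    ← intervalIntegral.integral_of_le hab] at this

theorem sq_div_two_sqrt_add_sqrt_mul_le {a e T : ℝ} (hT : 0 < T) :
    (a / (2 * √T) + √T * e) ^ 2 ≤ a ^ 2 / (2 * T) + 2 * T * e ^ 2 := by
  have hsq : √T ^ 2 = T := sq_sqrt hT.le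
  calc (a / (2 * √T) + √T * e) ^ 2 ≤ 2 * ((a / (2 * √T)) ^ 2 + (√T * e) ^ 2) := add_sq_le
    _ = a ^ 2 / (2 * T) + 2 * T * e ^ 2 := by
        rw [div_pow, mul_pow, mul_pow, hsq]; field_simp

section SpaceTimeKernel

variable {η : ℝ → ℝ → ℝ} {t T₀ : ℝ}

theorem mpr_sq_le {T : ℝ} (hT : T ∈ Ioc 0 T₀) (hη : MemLp (η t) 2 (volume.restrict (Ioc 0 T₀))) :
    mpr η t T ^ 2 ≤ T * ∫ u in Ioc 0 T₀, η t u ^ 2 := by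
  have hsub : Ioc 0 T ⊆ Ioc 0 T₀ := Ioc_subset_Ioc_right hT.2
  calc mpr η t T ^ 2 ≤ (T - 0) * ∫ u in Ioc 0 T, η t u ^ 2 :=
        sq_intervalIntegral_le_mul_integral_sq hT.1.le
          (hη.mono_measure (Measure.restrict_mono hsub le_rfl))
    _ ≤ T * ∫ u in Ioc 0 T₀, η t u ^ 2 := by
        rw [sub_zero]
        exact mul_le_mul_of_nonneg_left (setIntegral_mono_set hη.integrable_sq
          (Filter.Eventually.of_forall fun _ => sq_nonneg _) hsub.eventuallyLE) hT.1.le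

theorem gker_sq_le {T : ℝ} (hT : T ∈ Ioc 0 T₀) (hη : MemLp (η t) 2 (volume.restrict (Ioc 0 T₀))) :
    gker η t T ^ 2 ≤ (∫ u in Ioc 0 T₀, η t u ^ 2) / 2 + 2 * T₀ * η t T ^ 2 := by
  have hT0 : 0 < T := hT.1
  calc gker η t T ^ 2 ≤ mpr η t T ^ 2 / (2 * T) + 2 * T * η t T ^ 2 :=
        sq_div_two_sqrt_add_sqrt_mul_le hT0
    _ ≤ T * (∫ u in Ioc 0 T₀, η t u ^ 2) / (2 * T) + 2 * T₀ * η t T ^ 2 := by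
        gcongr
        exacts [mpr_sq_le hT hη, hT.2]
    _ = (∫ u in Ioc 0 T₀, η t u ^ 2) / 2 + 2 * T₀ * η t T ^ 2 := by
        field_simp

theorem integral_gker_sq_le (hT₀ : 0 ≤ T₀) (hη : MemLp (η t) 2 (volume.restrict (Ioc 0 T₀))) :
    ∫ T in Ioc 0 T₀, gker η t T ^ 2 ≤ 5 * T₀ / 2 * ∫ u in Ioc 0 T₀, η t u ^ 2 := by
  set E := ∫ u in Ioc 0 T₀, η t u ^ 2
  have hbound : Integrable (fun T => E / 2 + 2 * T₀ * η t T ^ 2) (volume.restrict (Ioc 0 T₀)) :=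
    (integrable_const _).add (hη.integrable_sq.const_mul _)
  calc ∫ T in Ioc 0 T₀, gker η t T ^ 2 ≤ ∫ T in Ioc 0 T₀, (E / 2 + 2 * T₀ * η t T ^ 2) :=
        integral_mono_of_nonneg (Filter.Eventually.of_forall fun _ => sq_nonneg _) hbound
          ((ae_restrict_iff' measurableSet_Ioc).mpr
            (Filter.Eventually.of_forall fun _ hT => gker_sq_le hT hη))
    _ = 5 * T₀ / 2 * E := by
        rw [integral_add (integrable_const _) (hη.integrable_sq.const_mul _), setIntegral_const,
          integral_const_mul, volume_real_Ioc_of_le hT₀, smul_eq_mul]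
        ring

end SpaceTimeKernel

theorem MeasureTheory.MemLp.ae_memLp_two_prodMk_left {α β : Type*} [MeasurableSpace α]
    [MeasurableSpace β] {μ : Measure α} {ν : Measure β} [SFinite μ] [SFinite ν] {f : α × β → ℝ}
    (hf : MemLp f 2 (μ.prod ν)) : ∀ᵐ x ∂μ, MemLp (fun y => f (x, y)) 2 ν := by
  filter_upwards [hf.1.prodMk_left, hf.integrable_sq.prod_right_ae] with x hmeas hsq
  exact (memLp_two_iff_integrable_sq hmeas).mpr hsq

/-- For `η ∈ L²([0,T₀]²)`,
`∫₀^{T₀}∫₀^{T₀} g(t,T)² dT dt ≤ (5T₀/2)·∫₀^{T₀}∫₀^{T₀} η(t,u)² du dt`. -/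
theorem stmt4 (T₀ : ℝ) (hT₀ : 0 < T₀) (η : ℝ → ℝ → ℝ)
    (hη : MemLp (Function.uncurry η) 2
      (volume.restrict (Ioc (0:ℝ) T₀ ×ˢ Ioc (0:ℝ) T₀))) :
    ∫ t in Ioc (0:ℝ) T₀, ∫ T in Ioc (0:ℝ) T₀, (gker η t T) ^ 2
      ≤ (5 * T₀ / 2) * ∫ t in Ioc (0:ℝ) T₀, ∫ u in Ioc (0:ℝ) T₀, η t u ^ 2 := by
  rw [Measure.volume_eq_prod, ← Measure.prod_restrict] at hη
  have hsq_int : Integrable (fun t => ∫ u in Ioc 0 T₀, η t u ^ 2) (volume.restrict (Ioc 0 T₀)) :=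
    hη.integrable_sq.integral_prod_left
  calc ∫ t in Ioc 0 T₀, ∫ T in Ioc 0 T₀, gker η t T ^ 2
      ≤ ∫ t in Ioc 0 T₀, 5 * T₀ / 2 * ∫ u in Ioc 0 T₀, η t u ^ 2 :=
        integral_mono_of_nonneg
          (Filter.Eventually.of_forall fun _ => integral_nonneg fun _ => sq_nonneg _)
          (hsq_int.const_mul _)
          (hη.ae_memLp_two_prodMk_left.mono fun _ ht => integral_gker_sq_le hT₀.le ht)
    _ = 5 * T₀ / 2 * ∫ t in Ioc 0 T₀, ∫ u in Ioc 0 T₀, η t u ^ 2 := integral_const_mul _ _
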